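/- arXiv:2107.09943 — 2 statements merged into one kernel-verified Lean document; each statement's English description precedes it below -/
import Mathlib

section
/- For the superpotential W = aX + dXPQ + ξX²A + σPA² with a ≠ 0 and d ≠ 0, every solution of the F-term equations has P ≠ 0 and Q ≠ 0; in particular the U(1) R-symmetry acting with charges (2,6,-6,-2) on (X,P,Q,A) is spontaneously broken at every such solution. -/
/-!
The F-term `∂W/∂Q = dXP` forces `X = 0` or `P = 0`. If `P = 0`, then `∂W/∂A = ξX²` vanishes,
so `(ξX)² = ξ·ξX² = 0`, and `∂W/∂X = a + 2ξXA` reduces to `a = 0`. Hence `P ≠ 0` and `X = 0`,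
and `∂W/∂X = a + dPQ = 0` forces `PQ ≠ 0`.
-/

noncomputable def W (a d ξ σ : ℂ) (X P Q A : ℂ) : ℂ :=
  a * X + d * X * P * Q + ξ * X ^ 2 * A + σ * P * A ^ 2

section FTerms

variable (a d ξ σ X P Q A : ℂ)

theorem hasDerivAt_W_X :
    HasDerivAt (fun X' => W a d ξ σ X' P Q A) (a + d * P * Q + 2 * ξ * X * A) X := by
  have hW : (fun X' => W a d ξ σ X' P Q A) =
      fun X' => (a + d * P * Q) * X' + ξ * A * X' ^ 2 + σ * P * A ^ 2 := by
    funext X'; unfold W; ring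
  rw [hW]
  exact ((((hasDerivAt_id' X).const_mul _).add ((hasDerivAt_pow 2 X).const_mul _)).add_const _)
    |>.congr_deriv (by push_cast; ring)

theorem hasDerivAt_W_Q : HasDerivAt (fun Q' => W a d ξ σ X P Q' A) (d * X * P) Q := by
  have hW : (fun Q' => W a d ξ σ X P Q' A) =
      fun Q' => d * X * P * Q' + (a * X + ξ * X ^ 2 * A + σ * P * A ^ 2) := by
    funext Q'; unfold W; ring
  rw [hW]
  exact (((hasDerivAt_id' Q).const_mul _).add_const _).congr_deriv (mul_one _)

theorem hasDerivAt_W_A :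
    HasDerivAt (fun A' => W a d ξ σ X P Q A') (ξ * X ^ 2 + 2 * σ * P * A) A := by
  have hW : (fun A' => W a d ξ σ X P Q A') =
      fun A' => ξ * X ^ 2 * A' + σ * P * A' ^ 2 + (a * X + d * X * P * Q) := by
    funext A'; unfold W; ring
  rw [hW]
  exact ((((hasDerivAt_id' A).const_mul _).add ((hasDerivAt_pow 2 A).const_mul _)).add_const _)
    |>.congr_deriv (by push_cast; ring)

end FTerms

theorem ne_zero_and_ne_zero_of_fTerms {a d ξ σ X P Q A : ℂ} (ha : a ≠ 0) (hd : d ≠ 0)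
    (hX : a + d * P * Q + 2 * ξ * X * A = 0) (hQ : d * X * P = 0)
    (hA : ξ * X ^ 2 + 2 * σ * P * A = 0) : P ≠ 0 ∧ Q ≠ 0 := by
  have hP : P ≠ 0 := by
    rintro rfl
    have hξX : ξ * X = 0 := pow_eq_zero_iff two_ne_zero |>.mp (by linear_combination ξ * hA)
    exact ha (by linear_combination hX - 2 * A * hξX)
  have hX0 : X = 0 := by simpa [hd, hP] using hQ
  subst hX0
  exact ⟨hP, by rintro rfl; exact ha (by linear_combination hX)⟩

theorem R_symmetry_broken_general (a d ξ σ : ℂ) (ha : a ≠ 0) (hd : d ≠ 0) (X P Q A : ℂ)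
    (h1 : deriv (fun X' => W a d ξ σ X' P Q A) X = 0)
    (h3 : deriv (fun Q' => W a d ξ σ X P Q' A) Q = 0)
    (h4 : deriv (fun A' => W a d ξ σ X P Q A') A = 0) :
    P ≠ 0 ∧ Q ≠ 0 := by
  rw [(hasDerivAt_W_X a d ξ σ X P Q A).deriv] at h1
  rw [(hasDerivAt_W_Q a d ξ σ X P Q A).deriv] at h3
  rw [(hasDerivAt_W_A a d ξ σ X P Q A).deriv] at h4
  exact ne_zero_and_ne_zero_of_fTerms ha hd h1 h3 h4

/-- For W = aX + dXPQ + ξX²A + σPA² with a ≠ 0 and d ≠ 0, every solution of the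
F-term equations has P ≠ 0 and Q ≠ 0, so the R-symmetry with charges (2,6,-6,-2)
is spontaneously broken at every such solution. -/
theorem R_symmetry_broken (a d ξ σ : ℂ) (ha : a ≠ 0) (hd : d ≠ 0) (X P Q A : ℂ)
    (h1 : deriv (fun X' => W a d ξ σ X' P Q A) X = 0)
    (h2 : deriv (fun P' => W a d ξ σ X P' Q A) P = 0)
    (h3 : deriv (fun Q' => W a d ξ σ X P Q' A) Q = 0)
    (h4 : deriv (fun A' => W a d ξ σ X P Q A') A = 0) :
    P ≠ 0 ∧ Q ≠ 0 :=
  R_symmetry_broken_general a d ξ σ ha hd X P Q A h1 h3 h4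
end

section
/- For the superpotential W = aX + dXPQ + ξX²A + σPA² with a ≠ 0, d ≠ 0, ξ ≠ 0, σ ≠ 0, the solution set of the F-term equations is exactly { (0, P, -a/(dP), 0) : P ∈ ℂ, P ≠ 0 }, a one-complex-dimensional family. -/
section Derivatives

variable {𝕜 : Type*} [NontriviallyNormedField 𝕜]

theorem hasDerivAt_quadratic (c₀ c₁ c₂ x : 𝕜) :
    HasDerivAt (fun y => c₀ + c₁ * y + c₂ * y ^ 2) (c₁ + 2 * c₂ * x) x :=
  ((((hasDerivAt_id x).const_mul c₁).const_add c₀).add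
    ((hasDerivAt_pow 2 x).const_mul c₂)).congr_deriv (by
      simp only [mul_one, Nat.cast_ofNat, Nat.add_one_sub_one, pow_one, add_right_inj]; ring)

theorem deriv_quadratic (c₀ c₁ c₂ x : 𝕜) :
    deriv (fun y => c₀ + c₁ * y + c₂ * y ^ 2) x = c₁ + 2 * c₂ * x :=
  (hasDerivAt_quadratic c₀ c₁ c₂ x).deriv

end Derivatives

section PartialDerivatives

variable (a d ξ σ X P Q A : ℂ)

theorem deriv_W_X :
    deriv (fun X' => W a d ξ σ X' P Q A) X = a + d * P * Q + 2 * ξ * X * A := by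
  have hW : (fun X' => W a d ξ σ X' P Q A) =
      fun X' => σ * P * A ^ 2 + (a + d * P * Q) * X' + ξ * A * X' ^ 2 := by
    funext X'; simp only [W]; ring
  rw [hW, deriv_quadratic]
  ring

theorem deriv_W_P :
    deriv (fun P' => W a d ξ σ X P' Q A) P = d * X * Q + σ * A ^ 2 := by
  have hW : (fun P' => W a d ξ σ X P' Q A) =
      fun P' => a * X + ξ * X ^ 2 * A + (d * X * Q + σ * A ^ 2) * P' := by
    funext P'; simp only [W]; ring
  rw [hW]
  simp

theorem deriv_W_Q :
    deriv (fun Q' => W a d ξ σ X P Q' A) Q = d * X * P := by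
  have hW : (fun Q' => W a d ξ σ X P Q' A) =
      fun Q' => a * X + ξ * X ^ 2 * A + σ * P * A ^ 2 + d * X * P * Q' := by
    funext Q'; simp only [W]; ring
  rw [hW]
  simp

theorem deriv_W_A :
    deriv (fun A' => W a d ξ σ X P Q A') A = ξ * X ^ 2 + 2 * σ * P * A := by
  have hW : (fun A' => W a d ξ σ X P Q A') =
      fun A' => a * X + d * X * P * Q + ξ * X ^ 2 * A' + σ * P * A' ^ 2 := by
    funext A'; simp only [W]
  rw [hW, deriv_quadratic]
  ring

end PartialDerivatives

theorem fterm_polynomial_system_iff {K : Type*} [Field K] {a d ξ σ : K} (ha : a ≠ 0)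
    (hd : d ≠ 0) (hξ : ξ ≠ 0) (hσ : σ ≠ 0) {X P Q A : K} :
    (a + d * P * Q + 2 * ξ * X * A = 0 ∧ d * X * Q + σ * A ^ 2 = 0 ∧ d * X * P = 0 ∧
      ξ * X ^ 2 + 2 * σ * P * A = 0) ↔
    (X = 0 ∧ A = 0 ∧ P ≠ 0 ∧ Q = -a / (d * P)) := by
  constructor
  · rintro ⟨hFX, hFP, hFQ, hFA⟩
    have hXP : X * P = 0 := by simpa [mul_assoc, hd] using hFQ
    have hX : X = 0 := by
      have : ξ * X ^ 3 = 0 := by linear_combination X * hFA - 2 * σ * A * hXP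
      simpa [hξ] using this
    subst hX
    have hA : A = 0 := by simpa [hσ] using hFP
    subst hA
    have hPQ : d * P * Q = -a := by linear_combination hFX
    have hP : P ≠ 0 := by
      rintro rfl
      exact ha (by simpa using hPQ.symm)
    refine ⟨rfl, rfl, hP, ?_⟩
    rw [eq_div_iff (mul_ne_zero hd hP), ← hPQ]
    ring
  · rintro ⟨rfl, rfl, hP, rfl⟩
    refine ⟨?_, by ring, by ring, by ring⟩
    field_simp
    ring

/-- For W = aX + dXPQ + ξX²A + σPA² with all coefficients nonzero, the solution set of
the F-term equations is exactly { (0, P, -a/(dP), 0) : P ∈ ℂ, P ≠ 0 }. -/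
theorem fterm_solution_set (a d ξ σ : ℂ) (ha : a ≠ 0) (hd : d ≠ 0) (hξ : ξ ≠ 0)
    (hσ : σ ≠ 0) (X P Q A : ℂ) :
    (deriv (fun X' => W a d ξ σ X' P Q A) X = 0 ∧
     deriv (fun P' => W a d ξ σ X P' Q A) P = 0 ∧
     deriv (fun Q' => W a d ξ σ X P Q' A) Q = 0 ∧
     deriv (fun A' => W a d ξ σ X P Q A') A = 0) ↔
    (X = 0 ∧ A = 0 ∧ P ≠ 0 ∧ Q = -a / (d * P)) := by
  rw [deriv_W_X, deriv_W_P, deriv_W_Q, deriv_W_A]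
  exact fterm_polynomial_system_iff ha hd hξ hσ
end
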